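/- Let f be convex and differentiable on [a,b] with f'(a) ≠ f'(b), and let T be the triangle with vertices (a,f(a)), (b,f(b)), and the tangent-intersection point (c, h) with h = f(a)+f'(a)(c-a). Then every point of T lies within vertical distance (b-a)·|f'(b)-f'(a)|/4 of the graph of f; specifically, for every (x,y) ∈ T, |y - f(x)| ≤ s(x) - t(x) where s is the secant and t the tangent envelope. -/

import Mathlib

open Set

/-!
On `[a, b]` the graph of `f` lies between the tangent envelope `t` and the secant `s`. So does
the triangle `T`: the region between a convex and a concave function is convex, and it contains
the three vertices. Hence `p.2` and `f p.1` both lie in `[t p.1, s p.1]`. With `m` the slope of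
the secant, `s x - t x = min ((m - f'(a)) (x - a)) ((f'(b) - m) (b - x))`, and
`min (A u) (B v) ≤ √(A B u v) ≤ (A + B) (u + v) / 4` by AM-GM.
-/

theorem ConvexOn.tangent_le_of_hasDerivAt {S : Set ℝ} {f : ℝ → ℝ} {x y f' : ℝ}
    (hf : ConvexOn ℝ S f) (hx : x ∈ S) (hy : y ∈ S) (hfx : HasDerivAt f f' x) :
    f x + f' * (y - x) ≤ f y := by
  rcases lt_trichotomy x y with hxy | rfl | hyx
  · have h := hf.le_slope_of_hasDerivAt hx hy hxy hfx
    rw [slope_def_field, le_div_iff₀ (sub_pos.2 hxy)] at h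
    linarith
  · simp
  · have h := hf.slope_le_of_hasDerivAt hy hx hyx hfx
    rw [slope_def_field, div_le_iff₀ (sub_pos.2 hyx)] at h
    linarith

theorem ConvexOn.le_secant {S : Set ℝ} {f : ℝ → ℝ} {a b x : ℝ} (hf : ConvexOn ℝ S f)
    (ha : a ∈ S) (hb : b ∈ S) (hx : x ∈ S) (hax : a ≤ x) (hxb : x ≤ b) :
    f x ≤ f a + (f b - f a) / (b - a) * (x - a) := by
  rcases hax.eq_or_lt with rfl | hax
  · simp
  have h := hf.secant_mono ha hx hb hax.ne' (hax.trans_le hxb).ne' hxb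
  rw [div_le_iff₀ (sub_pos.2 hax)] at h
  linarith

theorem convexOn_add_mul_sub {s : Set ℝ} (hs : Convex ℝ s) (α k x₀ : ℝ) :
    ConvexOn ℝ s fun x => α + k * (x - x₀) :=
  ⟨hs, fun _ _ _ _ u v _ _ huv => le_of_eq <| by
    simp only [smul_eq_mul]; linear_combination (k * x₀ - α) * huv⟩

theorem concaveOn_add_mul_sub {s : Set ℝ} (hs : Convex ℝ s) (α k x₀ : ℝ) :
    ConcaveOn ℝ s fun x => α + k * (x - x₀) :=
  ⟨hs, fun _ _ _ _ u v _ _ huv => le_of_eq <| by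
    simp only [smul_eq_mul]; linear_combination (α - k * x₀) * huv⟩

theorem ConvexOn.convex_setOf_between {𝕜 E β : Type*} [Semiring 𝕜] [PartialOrder 𝕜]
    [AddCommMonoid E] [AddCommMonoid β] [PartialOrder β] [IsOrderedAddMonoid β]
    [SMul 𝕜 E] [Module 𝕜 β] [PosSMulMono 𝕜 β] {s : Set E} {lo hi : E → β}
    (hlo : ConvexOn 𝕜 s lo) (hhi : ConcaveOn 𝕜 s hi) :
    Convex 𝕜 {p : E × β | p.1 ∈ s ∧ lo p.1 ≤ p.2 ∧ p.2 ≤ hi p.1} := by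
  convert hlo.convex_epigraph.inter hhi.convex_hypograph using 1
  ext p
  exact ⟨fun ⟨h, h₁, h₂⟩ => ⟨⟨h, h₁⟩, h, h₂⟩, fun ⟨⟨h, h₁⟩, _, h₂⟩ => ⟨h, h₁, h₂⟩⟩

theorem min_mul_le_add_mul_add_div_four {A B u v : ℝ} (hA : 0 ≤ A) (hB : 0 ≤ B) (hu : 0 ≤ u)
    (hv : 0 ≤ v) :
    min (A * u) (B * v) ≤ (A + B) * (u + v) / 4 := by
  refine le_of_sq_le_sq ?_ (by positivity)
  calc min (A * u) (B * v) ^ 2 ≤ (A * u) * (B * v) := by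
          rw [sq]; exact mul_le_mul (min_le_left _ _) (min_le_right _ _)
            (le_min (by positivity) (by positivity)) (by positivity)
      _ = (A * B) * (u * v) := by ring
      _ ≤ ((A + B) / 2) ^ 2 * ((u + v) / 2) ^ 2 := by
          gcongr
          · nlinarith [sq_nonneg (A - B)]
          · nlinarith [sq_nonneg (u - v)]
      _ = ((A + B) * (u + v) / 4) ^ 2 := by ring

theorem tangent_lines_meet {a b ya yb ka kb : ℝ} (hk : ka ≠ kb) :
    ya + ka * ((ya - yb + kb * b - ka * a) / (kb - ka) - a) =
      yb + kb * ((ya - yb + kb * b - ka * a) / (kb - ka) - b) := by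
  field_simp [sub_ne_zero.2 hk.symm]
  ring

theorem tangent_intersection_mem_Icc {a b ya yb ka kb : ℝ} (hab : a < b)
    (hka : ka ≤ (yb - ya) / (b - a)) (hkb : (yb - ya) / (b - a) ≤ kb) (hk : ka ≠ kb) :
    (ya - yb + kb * b - ka * a) / (kb - ka) ∈ Icc a b := by
  have hk' : 0 < kb - ka := sub_pos.2 ((hka.trans hkb).lt_of_ne hk)
  rw [le_div_iff₀ (sub_pos.2 hab)] at hka
  rw [div_le_iff₀ (sub_pos.2 hab)] at hkb
  constructor
  · rw [le_div_iff₀ hk']; linarith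
  · rw [div_le_iff₀ hk']; linarith

theorem convexHull_triangle_subset_between_tangents_and_secant {a b c ya yb ka kb : ℝ}
    (hab : a < b) (hka : ka ≤ (yb - ya) / (b - a)) (hkb : (yb - ya) / (b - a) ≤ kb)
    (hc : c ∈ Icc a b) (hmeet : ya + ka * (c - a) = yb + kb * (c - b)) :
    convexHull ℝ {(a, ya), (b, yb), (c, ya + ka * (c - a))} ⊆
      {q : ℝ × ℝ | q.1 ∈ Icc a b ∧
        max (ya + ka * (q.1 - a)) (yb + kb * (q.1 - b)) ≤ q.2 ∧
        q.2 ≤ ya + (yb - ya) / (b - a) * (q.1 - a)} := by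
  have hI : Convex ℝ (Icc a b) := convex_Icc a b
  refine convexHull_min ?_ (ConvexOn.convex_setOf_between
    ((convexOn_add_mul_sub hI _ _ _).sup (convexOn_add_mul_sub hI _ _ _))
    (concaveOn_add_mul_sub hI _ _ _))
  have hsec : ya + (yb - ya) / (b - a) * (b - a) = yb := by
    field_simp [(sub_pos.2 hab).ne']; ring
  have hka' : ya + ka * (b - a) ≤ yb := by
    rw [le_div_iff₀ (sub_pos.2 hab)] at hka; linarith
  have hkb' : yb + kb * (a - b) ≤ ya := by
    rw [div_le_iff₀ (sub_pos.2 hab)] at hkb; linarith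
  refine insert_subset_iff.2 ⟨?_, insert_subset_iff.2 ⟨?_, singleton_subset_iff.2 ?_⟩⟩
  · exact ⟨left_mem_Icc.2 hab.le, max_le (by simp) hkb', by simp⟩
  · exact ⟨right_mem_Icc.2 hab.le, max_le hka' (by simp), hsec.ge⟩
  · exact ⟨hc, max_le le_rfl hmeet.ge,
      add_le_add_right (mul_le_mul_of_nonneg_right hka (sub_nonneg.2 hc.1)) _⟩

theorem secant_sub_max_tangent_le {a b x ya yb ka kb : ℝ} (hab : a < b) (hax : a ≤ x)
    (hxb : x ≤ b) (hka : ka ≤ (yb - ya) / (b - a)) (hkb : (yb - ya) / (b - a) ≤ kb) :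
    ya + (yb - ya) / (b - a) * (x - a) - max (ya + ka * (x - a)) (yb + kb * (x - b)) ≤
      (b - a) * (kb - ka) / 4 := by
  set m := (yb - ya) / (b - a) with hm
  have hyb : yb = ya + m * (b - a) := by rw [hm]; field_simp [(sub_pos.2 hab).ne']; ring
  calc ya + m * (x - a) - max (ya + ka * (x - a)) (yb + kb * (x - b))
      = min ((m - ka) * (x - a)) ((kb - m) * (b - x)) := by
        rw [← min_sub_sub_left, hyb]; congr 1 <;> ring
    _ ≤ (m - ka + (kb - m)) * (x - a + (b - x)) / 4 :=
        min_mul_le_add_mul_add_div_four (sub_nonneg.2 hka) (sub_nonneg.2 hkb) (sub_nonneg.2 hax)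
          (sub_nonneg.2 hxb)
    _ = (b - a) * (kb - ka) / 4 := by ring

theorem triangle_points_close_to_graph_general
    (f : ℝ → ℝ) (a b fa' fb' : ℝ) (hab : a < b)
    (hconv : ConvexOn ℝ (Set.Icc a b) f)
    (hfa : HasDerivAt f fa' a) (hfb : HasDerivAt f fb' b)
    (hne : fa' ≠ fb') :
    let c := (f a - f b + fb' * b - fa' * a) / (fb' - fa')
    let s : ℝ → ℝ := fun x => f a + ((f b - f a) / (b - a)) * (x - a)
    let t : ℝ → ℝ := fun x => max (f a + fa' * (x - a)) (f b + fb' * (x - b))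
    let T := convexHull ℝ ({(a, f a), (b, f b), (c, f a + fa' * (c - a))} : Set (ℝ × ℝ))
    ∀ p ∈ T, |p.2 - f p.1| ≤ s p.1 - t p.1 ∧
      |p.2 - f p.1| ≤ (b - a) * |fb' - fa'| / 4 := by
  intro c s t T p hp
  have ha : a ∈ Icc a b := left_mem_Icc.2 hab.le
  have hb : b ∈ Icc a b := right_mem_Icc.2 hab.le
  have hka : fa' ≤ (f b - f a) / (b - a) :=
    slope_def_field f a b ▸ hconv.le_slope_of_hasDerivAt ha hb hab hfa
  have hkb : (f b - f a) / (b - a) ≤ fb' :=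
    slope_def_field f a b ▸ hconv.slope_le_of_hasDerivAt ha hb hab hfb
  obtain ⟨hx, htp, hps⟩ := convexHull_triangle_subset_between_tangents_and_secant hab hka hkb
    (tangent_intersection_mem_Icc hab hka hkb hne) (tangent_lines_meet hne) hp
  have htf : t p.1 ≤ f p.1 :=
    max_le (hconv.tangent_le_of_hasDerivAt ha hx hfa) (hconv.tangent_le_of_hasDerivAt hb hx hfb)
  have hfs : f p.1 ≤ s p.1 := hconv.le_secant ha hb hx hx.1 hx.2
  have hgap : |p.2 - f p.1| ≤ s p.1 - t p.1 := abs_sub_le_iff.2 ⟨by linarith, by linarith⟩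
  refine ⟨hgap, hgap.trans ?_⟩
  rw [abs_of_pos (sub_pos.2 ((hka.trans hkb).lt_of_ne hne))]
  exact secant_sub_max_tangent_le hab hx.1 hx.2 hka hkb

theorem triangle_points_close_to_graph
    (f : ℝ → ℝ) (a b fa' fb' : ℝ) (hab : a < b)
    (hconv : ConvexOn ℝ (Set.Icc a b) f)
    (hdiff : DifferentiableOn ℝ f (Set.Icc a b))
    (hfa : HasDerivAt f fa' a) (hfb : HasDerivAt f fb' b)
    (hne : fa' ≠ fb') :
    let c := (f a - f b + fb' * b - fa' * a) / (fb' - fa')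
    let s : ℝ → ℝ := fun x => f a + ((f b - f a) / (b - a)) * (x - a)
    let t : ℝ → ℝ := fun x => max (f a + fa' * (x - a)) (f b + fb' * (x - b))
    let T := convexHull ℝ ({(a, f a), (b, f b), (c, f a + fa' * (c - a))} : Set (ℝ × ℝ))
    ∀ p ∈ T, |p.2 - f p.1| ≤ s p.1 - t p.1 ∧
      |p.2 - f p.1| ≤ (b - a) * |fb' - fa'| / 4 :=
  triangle_points_close_to_graph_general f a b fa' fb' hab hconv hfa hfb hne
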